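/- arXiv:2406.06942 — 2 statements merged into one kernel-verified Lean document; each statement's English description precedes it below -/
import Mathlib

section
/- Let A, B be tensors as in the t-linear regression problem, M orthogonal, D diagonal with entries ±1. Then the minimum value of ‖A ⋆_{DM} X − B‖_F over X equals the minimum value of ‖A ⋆_M X − B‖_F over X; that is, the reduced regression objective is invariant under left multiplication of M by a sign matrix. -/
open Matrix

/-- Mode-3 product: apply `M` along each mode-3 fiber (tube). -/
def mode3 {n₁ n₂ n₃ q : ℕ} (M : Matrix (Fin q) (Fin n₃) ℝ)
    (A : Fin n₁ → Fin n₂ → Fin n₃ → ℝ) : Fin n₁ → Fin n₂ → Fin q → ℝ :=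
  fun i j k => ∑ l, M k l * A i j l

/-- Facewise product: multiply corresponding frontal slices. -/
def facewise {n₁ p n₂ n₃ : ℕ} (A : Fin n₁ → Fin p → Fin n₃ → ℝ)
    (B : Fin p → Fin n₂ → Fin n₃ → ℝ) : Fin n₁ → Fin n₂ → Fin n₃ → ℝ :=
  fun i j k => ∑ t, A i t k * B t j k

/-- Tensor Frobenius norm. -/
noncomputable def fnorm {n₁ n₂ n₃ : ℕ} (A : Fin n₁ → Fin n₂ → Fin n₃ → ℝ) : ℝ :=
  Real.sqrt (∑ i, ∑ j, ∑ k, (A i j k) ^ 2)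

/-- The `⋆_N`-product for invertible `N`: `Y ⋆_N Z = ((Y ×₃ N) △ (Z ×₃ N)) ×₃ N⁻¹`. -/
noncomputable def tstar {n₁ p n₂ n₃ : ℕ} (N : Matrix (Fin n₃) (Fin n₃) ℝ)
    (Y : Fin n₁ → Fin p → Fin n₃ → ℝ) (Z : Fin p → Fin n₂ → Fin n₃ → ℝ) :
    Fin n₁ → Fin n₂ → Fin n₃ → ℝ :=
  mode3 N⁻¹ (facewise (mode3 N Y) (mode3 N Z))

/-!
Write `D = diagonal d` with `d k = ±1`, so `D⁻¹ = D`. The substitution `X ↦ X ×₃ (M⁻¹ D M)`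
turns `A ⋆_{DM} X` into `A ⋆_M X`: in the transform domain it only rescales the `k`-th frontal
slice of the facewise product by `d k`, which is exactly what `(DM)⁻¹ = M⁻¹ D` does to
`(A ×₃ DM) △ (X ×₃ DM)`, the latter being `(A ×₃ M) △ (X ×₃ M)` since `d k ^ 2 = 1`.
The substitution is an involution, hence a bijection of the search space, so the two
infima agree.
-/

section ModeThree

variable {n₁ n₂ n₃ : ℕ}

lemma mode3_mode3 {q r : ℕ} (P : Matrix (Fin q) (Fin r) ℝ) (Q : Matrix (Fin r) (Fin n₃) ℝ)
    (A : Fin n₁ → Fin n₂ → Fin n₃ → ℝ) :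
    mode3 P (mode3 Q A) = mode3 (P * Q) A := by
  funext i j k
  simp only [mode3, Matrix.mul_apply, Finset.mul_sum, Finset.sum_mul]
  rw [Finset.sum_comm]
  exact Finset.sum_congr rfl fun l _ => Finset.sum_congr rfl fun m _ => by ring

lemma mode3_one (A : Fin n₁ → Fin n₂ → Fin n₃ → ℝ) : mode3 1 A = A := by
  funext i j k
  simp [mode3, Matrix.one_apply, ite_mul]

lemma mode3_diagonal_apply (d : Fin n₃ → ℝ) (A : Fin n₁ → Fin n₂ → Fin n₃ → ℝ)
    (i : Fin n₁) (j : Fin n₂) (k : Fin n₃) :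
    mode3 (diagonal d) A i j k = d k * A i j k := by
  simp [mode3, diagonal_apply, ite_mul]

lemma mode3_involutive {P : Matrix (Fin n₃) (Fin n₃) ℝ} (hP : P * P = 1) :
    Function.Involutive (mode3 P : (Fin n₁ → Fin n₂ → Fin n₃ → ℝ) → _) := fun A => by
  rw [mode3_mode3, hP, mode3_one]

end ModeThree

section Facewise

variable {n₁ p n₂ n₃ : ℕ} (d : Fin n₃ → ℝ)
  (Y : Fin n₁ → Fin p → Fin n₃ → ℝ) (Z : Fin p → Fin n₂ → Fin n₃ → ℝ)

lemma facewise_mode3_diagonal_left :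
    facewise (mode3 (diagonal d) Y) Z = mode3 (diagonal d) (facewise Y Z) := by
  funext i j k
  simp only [facewise, mode3_diagonal_apply, Finset.mul_sum]
  exact Finset.sum_congr rfl fun t _ => by ring

lemma facewise_mode3_diagonal_right :
    facewise Y (mode3 (diagonal d) Z) = mode3 (diagonal d) (facewise Y Z) := by
  funext i j k
  simp only [facewise, mode3_diagonal_apply, Finset.mul_sum]
  exact Finset.sum_congr rfl fun t _ => by ring

end Facewise

lemma conj_mul_self_eq_one {n : ℕ} {N : Matrix (Fin n) (Fin n) ℝ} (hN : IsUnit N.det)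
    {P : Matrix (Fin n) (Fin n) ℝ} (hP : P * P = 1) :
    (N⁻¹ * P * N) * (N⁻¹ * P * N) = 1 := by
  simp only [Matrix.mul_assoc, mul_nonsing_inv_cancel_left N _ hN]
  rw [← Matrix.mul_assoc P, hP, Matrix.one_mul, nonsing_inv_mul N hN]

lemma tstar_diagonal_mul {n₁ p n₂ n₃ : ℕ} {N : Matrix (Fin n₃) (Fin n₃) ℝ} (hN : IsUnit N.det)
    {d : Fin n₃ → ℝ} (hD_sq : diagonal d * diagonal d = 1)
    (Y : Fin n₁ → Fin p → Fin n₃ → ℝ) (Z : Fin p → Fin n₂ → Fin n₃ → ℝ) :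
    tstar (diagonal d * N) Y Z = tstar N Y (mode3 (N⁻¹ * diagonal d * N) Z) := by
  have hZ : mode3 N (mode3 (N⁻¹ * diagonal d * N) Z) = mode3 (diagonal d) (mode3 N Z) := by
    rw [mode3_mode3, mode3_mode3, Matrix.mul_assoc, mul_nonsing_inv_cancel_left N _ hN]
  unfold tstar
  rw [hZ, ← mode3_mode3 _ N Y, ← mode3_mode3 _ N Z, facewise_mode3_diagonal_left,
    facewise_mode3_diagonal_right]
  simp only [mode3_mode3, Matrix.mul_inv_rev, inv_eq_left_inv hD_sq, hD_sq,
    Matrix.mul_one]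

/-- The reduced `t`-linear regression objective is invariant under left multiplication
of `M` by a sign matrix. -/
theorem regression_sign_invariance {n₁ p n₂ n₃ : ℕ} (M : Matrix (Fin n₃) (Fin n₃) ℝ)
    (hM : Mᵀ * M = 1) (d : Fin n₃ → ℝ) (hd : ∀ i, d i = 1 ∨ d i = -1)
    (D : Matrix (Fin n₃) (Fin n₃) ℝ) (hD : D = Matrix.diagonal d)
    (A : Fin n₁ → Fin p → Fin n₃ → ℝ) (B : Fin n₁ → Fin n₂ → Fin n₃ → ℝ) :
    (⨅ X : Fin p → Fin n₂ → Fin n₃ → ℝ, fnorm (tstar (D * M) A X - B)) =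
      ⨅ X : Fin p → Fin n₂ → Fin n₃ → ℝ, fnorm (tstar M A X - B) := by
  have hM_unit : IsUnit M.det := isUnit_det_of_left_inverse hM
  have hD_sq : D * D = 1 := by
    rw [hD, diagonal_mul_diagonal', ← diagonal_one]
    exact congrArg diagonal (funext fun i => by rcases hd i with h | h <;> simp [h])
  subst hD
  simp_rw [tstar_diagonal_mul hM_unit hD_sq A]
  exact (mode3_involutive (conj_mul_self_eq_one hM_unit hD_sq)).surjective.iInf_comp
    fun X => fnorm (tstar M A X - B)
end

section
/- Let A ∈ ℝ^{n₁×p×n₃} have full implicit rank with respect to an orthogonal M, meaning every frontal slice of = A ×₃ M has full column rank p (with n₁ ≥ p). Then the minimizer of X ↦ ‖A ⋆_M X − B‖_F over ℝ^{p×n₂×n₃} is unique, and equals (Aᵀ ⋆_M A)⁻¹ ⋆_M Aᵀ ⋆_M B, where the tensor transpose and inverse are taken slicewise in the transform domain. -/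
open Matrix

/-- The `⋆_M`-transpose: transpose each frontal slice. -/
def tT {n₁ n₂ n₃ : ℕ} (A : Fin n₁ → Fin n₂ → Fin n₃ → ℝ) : Fin n₂ → Fin n₁ → Fin n₃ → ℝ :=
  fun i j k => A j i k

/-- The `⋆_M`-inverse, computed slicewise in the transform domain. -/
noncomputable def tinv {p n₃ : ℕ} (M : Matrix (Fin n₃) (Fin n₃) ℝ)
    (C : Fin p → Fin p → Fin n₃ → ℝ) : Fin p → Fin p → Fin n₃ → ℝ :=
  mode3 M⁻¹ (fun i j k => (Matrix.of fun i' j' => mode3 M C i' j' k)⁻¹ i j)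

/-!
The transform `T ↦ T ×₃ M` turns `⋆_M` into the facewise matrix product and, `M` being orthogonal,
preserves the Frobenius norm. Slice by slice, the normal equations make the residual
`R = A ⋆_M X₀ - B` of the candidate `X₀` satisfy `Aᵀ ⋆_M R = 0`, so `R` is orthogonal to every
`A ⋆_M D` and `‖A ⋆_M X - B‖² = ‖A ⋆_M (X - X₀)‖² + ‖R‖²`. Full rank of every slice makes `A ⋆_M ·`
injective, hence `X₀` is the unique minimizer.
-/

open Matrix

namespace Matrix

variable {K m n o : Type*} [Fintype m] [Fintype n]

theorem transpose_mul_self_add_of_transpose_mul_eq_zero [CommRing K] {A : Matrix m n K}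
    {R : Matrix m o K} (h : Aᵀ * R = 0) (D : Matrix n o K) :
    (A * D + R)ᵀ * (A * D + R) = (A * D)ᵀ * (A * D) + Rᵀ * R := by
  have hRA : Rᵀ * A = 0 := by simpa using congrArg transpose h
  rw [transpose_add, Matrix.add_mul, Matrix.mul_add, Matrix.mul_add, transpose_mul,
    Matrix.mul_assoc Dᵀ Aᵀ R, h, ← Matrix.mul_assoc Rᵀ, hRA]
  simp

variable [DecidableEq n]

theorem isUnit_of_rank_eq_card [Field K] {G : Matrix n n K} (h : G.rank = Fintype.card n) :
    IsUnit G := by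
  rw [← mulVec_surjective_iff_isUnit, ← coe_mulVecLin, ← LinearMap.range_eq_top]
  apply Submodule.eq_top_of_finrank_eq
  rw [← Matrix.rank, h, Module.finrank_fintype_fun_eq_card]

theorem isUnit_det_transpose_mul_self_of_rank_eq_card [Field K] [LinearOrder K]
    [IsStrictOrderedRing K] {A : Matrix m n K} (h : A.rank = Fintype.card n) :
    IsUnit (Aᵀ * A).det :=
  (isUnit_iff_isUnit_det _).mp (isUnit_of_rank_eq_card (by rw [rank_transpose_mul_self, h]))

theorem eq_zero_of_mul_eq_zero_of_isUnit_det_transpose_mul_self [CommRing K] {A : Matrix m n K}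
    (hA : IsUnit (Aᵀ * A).det) {D : Matrix n o K} (h : A * D = 0) : D = 0 := by
  calc D = (Aᵀ * A)⁻¹ * (Aᵀ * A * D) := (nonsing_inv_mul_cancel_left _ D hA).symm
    _ = 0 := by rw [Matrix.mul_assoc Aᵀ, h, Matrix.mul_zero, Matrix.mul_zero]

theorem transpose_mul_residual_eq_zero [CommRing K] {A : Matrix m n K}
    (hA : IsUnit (Aᵀ * A).det) (B : Matrix m o K) :
    Aᵀ * (A * ((Aᵀ * A)⁻¹ * (Aᵀ * B)) - B) = 0 := by
  rw [Matrix.mul_sub, ← Matrix.mul_assoc, mul_nonsing_inv_cancel_left _ (Aᵀ * B) hA, sub_self]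

end Matrix

def frontalSlice {a b c : ℕ} (T : Fin a → Fin b → Fin c → ℝ) (k : Fin c) :
    Matrix (Fin a) (Fin b) ℝ :=
  Matrix.of fun i j => T i j k

section Transform

variable {a b c n₃ : ℕ}

theorem ext_frontalSlice {S T : Fin a → Fin b → Fin c → ℝ}
    (h : ∀ k, frontalSlice S k = frontalSlice T k) : S = T :=
  funext fun i => funext fun j => funext fun k => congrFun (congrFun (h k) i) j

@[simp]
theorem frontalSlice_zero (k : Fin c) : frontalSlice (0 : Fin a → Fin b → Fin c → ℝ) k = 0 := rfl

theorem frontalSlice_add (S T : Fin a → Fin b → Fin c → ℝ) (k : Fin c) :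
    frontalSlice (S + T) k = frontalSlice S k + frontalSlice T k := rfl

theorem frontalSlice_sub (S T : Fin a → Fin b → Fin c → ℝ) (k : Fin c) :
    frontalSlice (S - T) k = frontalSlice S k - frontalSlice T k := rfl

theorem frontalSlice_facewise {p : ℕ} (Y : Fin a → Fin p → Fin c → ℝ)
    (Z : Fin p → Fin b → Fin c → ℝ) (k : Fin c) :
    frontalSlice (facewise Y Z) k = frontalSlice Y k * frontalSlice Z k := by
  ext i j
  simp [frontalSlice, facewise, mul_apply]

theorem frontalSlice_mode3_tT (M : Matrix (Fin n₃) (Fin c) ℝ) (A : Fin a → Fin b → Fin c → ℝ)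
    (k : Fin n₃) : frontalSlice (mode3 M (tT A)) k = (frontalSlice (mode3 M A) k)ᵀ := rfl

@[simp]
theorem mode3_zero (M : Matrix (Fin n₃) (Fin c) ℝ) :
    mode3 M (0 : Fin a → Fin b → Fin c → ℝ) = 0 := by
  funext i j k
  simp [mode3]

theorem mode3_add (M : Matrix (Fin n₃) (Fin c) ℝ) (S T : Fin a → Fin b → Fin c → ℝ) :
    mode3 M (S + T) = mode3 M S + mode3 M T := by
  funext i j k
  simp [mode3, mul_add, Finset.sum_add_distrib]

theorem mode3_sub (M : Matrix (Fin n₃) (Fin c) ℝ) (S T : Fin a → Fin b → Fin c → ℝ) :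
    mode3 M (S - T) = mode3 M S - mode3 M T := by
  funext i j k
  simp [mode3, mul_sub, Finset.sum_sub_distrib]

theorem mode3_mode3_s13 {q : ℕ} (N : Matrix (Fin q) (Fin n₃) ℝ) (M : Matrix (Fin n₃) (Fin c) ℝ)
    (T : Fin a → Fin b → Fin c → ℝ) : mode3 N (mode3 M T) = mode3 (N * M) T := by
  funext i j k
  simp only [mode3, mul_apply, Finset.mul_sum, Finset.sum_mul, mul_assoc]
  exact Finset.sum_comm

theorem mode3_one_s13 (T : Fin a → Fin b → Fin c → ℝ) : mode3 (1 : Matrix (Fin c) (Fin c) ℝ) T = T := by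
  funext i j k
  simp [mode3, one_apply]

theorem tstar_sub {p : ℕ} (N : Matrix (Fin n₃) (Fin n₃) ℝ) (Y : Fin a → Fin p → Fin n₃ → ℝ)
    (Z Z' : Fin p → Fin b → Fin n₃ → ℝ) : tstar N Y (Z - Z') = tstar N Y Z - tstar N Y Z' := by
  funext i j k
  simp [tstar, mode3, facewise, mul_sub, Finset.sum_sub_distrib]

variable {M : Matrix (Fin n₃) (Fin n₃) ℝ}

theorem mode3_mode3_inv (hM : IsUnit M.det) (T : Fin a → Fin b → Fin n₃ → ℝ) :
    mode3 M (mode3 M⁻¹ T) = T := by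
  rw [mode3_mode3_s13, mul_nonsing_inv M hM, mode3_one_s13]

theorem mode3_inv_mode3 (hM : IsUnit M.det) (T : Fin a → Fin b → Fin n₃ → ℝ) :
    mode3 M⁻¹ (mode3 M T) = T := by
  rw [mode3_mode3_s13, nonsing_inv_mul M hM, mode3_one_s13]

theorem mode3_injective (hM : IsUnit M.det) :
    Function.Injective (mode3 M : (Fin a → Fin b → Fin n₃ → ℝ) → _) :=
  Function.LeftInverse.injective (mode3_inv_mode3 hM)

theorem frontalSlice_mode3_tstar (hM : IsUnit M.det) {p : ℕ} (Y : Fin a → Fin p → Fin n₃ → ℝ)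
    (Z : Fin p → Fin b → Fin n₃ → ℝ) (k : Fin n₃) :
    frontalSlice (mode3 M (tstar M Y Z)) k =
      frontalSlice (mode3 M Y) k * frontalSlice (mode3 M Z) k := by
  rw [tstar, mode3_mode3_inv hM, frontalSlice_facewise]

theorem frontalSlice_mode3_tinv (hM : IsUnit M.det) (C : Fin a → Fin a → Fin n₃ → ℝ)
    (k : Fin n₃) : frontalSlice (mode3 M (tinv M C)) k = (frontalSlice (mode3 M C) k)⁻¹ := by
  rw [tinv, mode3_mode3_inv hM]
  rfl

end Transform

section SqNorm

variable {a b c : ℕ}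

noncomputable def sqNorm (T : Fin a → Fin b → Fin c → ℝ) : ℝ :=
  ∑ i, ∑ j, ∑ k, T i j k ^ 2

theorem fnorm_eq_sqrt_sqNorm (T : Fin a → Fin b → Fin c → ℝ) : fnorm T = √(sqNorm T) := rfl

theorem sqNorm_nonneg (T : Fin a → Fin b → Fin c → ℝ) : 0 ≤ sqNorm T := by
  unfold sqNorm
  positivity

theorem sqNorm_eq_zero_iff {T : Fin a → Fin b → Fin c → ℝ} : sqNorm T = 0 ↔ T = 0 := by
  simp (disch := intros; positivity) only [sqNorm, Finset.sum_eq_zero_iff_of_nonneg,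
    Finset.mem_univ, forall_const, funext_iff, pow_eq_zero_iff two_ne_zero, Pi.zero_apply]

theorem sqNorm_eq_sum_trace (T : Fin a → Fin b → Fin c → ℝ) :
    sqNorm T = ∑ k, ((frontalSlice T k)ᵀ * frontalSlice T k).trace := by
  simp only [sqNorm, trace, diag, mul_apply, transpose_apply, frontalSlice, of_apply, ← sq]
  calc _ = ∑ i, ∑ k, ∑ j, T i j k ^ 2 := Finset.sum_congr rfl fun i _ => Finset.sum_comm
    _ = ∑ k, ∑ i, ∑ j, T i j k ^ 2 := Finset.sum_comm
    _ = _ := Finset.sum_congr rfl fun k _ => Finset.sum_comm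

theorem sqNorm_mode3 {M : Matrix (Fin c) (Fin c) ℝ} (hM : Mᵀ * M = 1)
    (T : Fin a → Fin b → Fin c → ℝ) : sqNorm (mode3 M T) = sqNorm T := by
  have hnorm : ∀ v : Fin c → ℝ, (M *ᵥ v) ⬝ᵥ (M *ᵥ v) = v ⬝ᵥ v := fun v => by
    rw [dotProduct_mulVec, ← mulVec_transpose, mulVec_mulVec, hM, one_mulVec]
  simp only [dotProduct, mulVec, ← sq] at hnorm
  exact Finset.sum_congr rfl fun i _ => Finset.sum_congr rfl fun j _ => hnorm _

end SqNorm

section Regression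

variable {n₁ p n₂ n₃ : ℕ} {M : Matrix (Fin n₃) (Fin n₃) ℝ} {A : Fin n₁ → Fin p → Fin n₃ → ℝ}

noncomputable def tLeastSquares (M : Matrix (Fin n₃) (Fin n₃) ℝ) (A : Fin n₁ → Fin p → Fin n₃ → ℝ)
    (B : Fin n₁ → Fin n₂ → Fin n₃ → ℝ) : Fin p → Fin n₂ → Fin n₃ → ℝ :=
  tstar M (tinv M (tstar M (tT A) A)) (tstar M (tT A) B)

theorem sqNorm_tstar_add_of_tstar_tT_eq_zero (hM : Mᵀ * M = 1) {R : Fin n₁ → Fin n₂ → Fin n₃ → ℝ}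
    (hR : tstar M (tT A) R = 0) (D : Fin p → Fin n₂ → Fin n₃ → ℝ) :
    sqNorm (tstar M A D + R) = sqNorm (tstar M A D) + sqNorm R := by
  have hMdet : IsUnit M.det := isUnit_det_of_left_inverse hM
  rw [← sqNorm_mode3 hM, ← sqNorm_mode3 hM (tstar M A D), ← sqNorm_mode3 hM R,
    sqNorm_eq_sum_trace, sqNorm_eq_sum_trace, sqNorm_eq_sum_trace, ← Finset.sum_add_distrib]
  refine Finset.sum_congr rfl fun k _ => ?_
  have hRk : (frontalSlice (mode3 M A) k)ᵀ * frontalSlice (mode3 M R) k = 0 := by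
    simpa [frontalSlice_mode3_tstar hMdet, frontalSlice_mode3_tT] using
      congrArg (fun T => frontalSlice (mode3 M T) k) hR
  rw [mode3_add, frontalSlice_add, frontalSlice_mode3_tstar hMdet,
    transpose_mul_self_add_of_transpose_mul_eq_zero hRk, trace_add]

theorem frontalSlice_mode3_tLeastSquares (hM : IsUnit M.det) (B : Fin n₁ → Fin n₂ → Fin n₃ → ℝ)
    (k : Fin n₃) :
    frontalSlice (mode3 M (tLeastSquares M A B)) k =
      ((frontalSlice (mode3 M A) k)ᵀ * frontalSlice (mode3 M A) k)⁻¹ *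
        ((frontalSlice (mode3 M A) k)ᵀ * frontalSlice (mode3 M B) k) := by
  rw [tLeastSquares, frontalSlice_mode3_tstar hM, frontalSlice_mode3_tinv hM,
    frontalSlice_mode3_tstar hM, frontalSlice_mode3_tstar hM, frontalSlice_mode3_tT]

theorem tstar_tT_residual_eq_zero (hM : IsUnit M.det)
    (hA : ∀ k, IsUnit ((frontalSlice (mode3 M A) k)ᵀ * frontalSlice (mode3 M A) k).det)
    (B : Fin n₁ → Fin n₂ → Fin n₃ → ℝ) :
    tstar M (tT A) (tstar M A (tLeastSquares M A B) - B) = 0 := by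
  refine mode3_injective hM (ext_frontalSlice fun k => ?_)
  rw [mode3_zero, frontalSlice_zero, frontalSlice_mode3_tstar hM, frontalSlice_mode3_tT,
    mode3_sub, frontalSlice_sub, frontalSlice_mode3_tstar hM,
    frontalSlice_mode3_tLeastSquares hM]
  exact transpose_mul_residual_eq_zero (hA k) _

theorem eq_zero_of_tstar_eq_zero (hM : IsUnit M.det)
    (hA : ∀ k, IsUnit ((frontalSlice (mode3 M A) k)ᵀ * frontalSlice (mode3 M A) k).det)
    {D : Fin p → Fin n₂ → Fin n₃ → ℝ} (h : tstar M A D = 0) : D = 0 := by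
  refine mode3_injective hM (ext_frontalSlice fun k => ?_)
  have hk := congrArg (fun T => frontalSlice (mode3 M T) k) h
  simp only [frontalSlice_mode3_tstar hM, mode3_zero, frontalSlice_zero] at hk
  rw [mode3_zero, frontalSlice_zero]
  exact eq_zero_of_mul_eq_zero_of_isUnit_det_transpose_mul_self (hA k) hk

end Regression

theorem regression_unique_solution_general {n₁ p n₂ n₃ : ℕ}
    (M : Matrix (Fin n₃) (Fin n₃) ℝ) (hM : Mᵀ * M = 1)
    (A : Fin n₁ → Fin p → Fin n₃ → ℝ) (B : Fin n₁ → Fin n₂ → Fin n₃ → ℝ)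
    (hrank : ∀ k : Fin n₃, (Matrix.of fun i t => mode3 M A i t k).rank = p) :
    (∀ X : Fin p → Fin n₂ → Fin n₃ → ℝ,
        fnorm (tstar M A (tstar M (tinv M (tstar M (tT A) A)) (tstar M (tT A) B)) - B) ≤
          fnorm (tstar M A X - B)) ∧
    (∀ X : Fin p → Fin n₂ → Fin n₃ → ℝ,
        (∀ X' : Fin p → Fin n₂ → Fin n₃ → ℝ,
          fnorm (tstar M A X - B) ≤ fnorm (tstar M A X' - B)) →
        X = tstar M (tinv M (tstar M (tT A) A)) (tstar M (tT A) B)) := by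
  have hMdet : IsUnit M.det := isUnit_det_of_left_inverse hM
  have hA : ∀ k, IsUnit ((frontalSlice (mode3 M A) k)ᵀ * frontalSlice (mode3 M A) k).det :=
    fun k => isUnit_det_transpose_mul_self_of_rank_eq_card <|
      (hrank k).trans (Fintype.card_fin p).symm
  set X₀ := tLeastSquares M A B
  have hpythagoras : ∀ X, sqNorm (tstar M A X - B) =
      sqNorm (tstar M A (X - X₀)) + sqNorm (tstar M A X₀ - B) := fun X => by
    rw [← sqNorm_tstar_add_of_tstar_tT_eq_zero hM (tstar_tT_residual_eq_zero hMdet hA B),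
      tstar_sub, sub_add_sub_cancel]
  refine ⟨fun X => ?_, fun X hX => ?_⟩
  · rw [fnorm_eq_sqrt_sqNorm, fnorm_eq_sqrt_sqNorm, hpythagoras X]
    exact Real.sqrt_le_sqrt (le_add_of_nonneg_left (sqNorm_nonneg _))
  · have hle := hX X₀
    rw [fnorm_eq_sqrt_sqNorm, fnorm_eq_sqrt_sqNorm, Real.sqrt_le_sqrt_iff (sqNorm_nonneg _),
      hpythagoras X, add_le_iff_nonpos_left] at hle
    have hzero : tstar M A (X - X₀) = 0 :=
      sqNorm_eq_zero_iff.mp (le_antisymm hle (sqNorm_nonneg _))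
    exact sub_eq_zero.mp (eq_zero_of_tstar_eq_zero hMdet hA hzero)

/-- If every frontal slice of `A ×₃ M` has full column rank `p`, the `t`-linear regression
minimizer is unique and equals `(Aᵀ ⋆_M A)⁻¹ ⋆_M (Aᵀ ⋆_M B)`. -/
theorem regression_unique_solution {n₁ p n₂ n₃ : ℕ} (hp : p ≤ n₁)
    (M : Matrix (Fin n₃) (Fin n₃) ℝ) (hM : Mᵀ * M = 1)
    (A : Fin n₁ → Fin p → Fin n₃ → ℝ) (B : Fin n₁ → Fin n₂ → Fin n₃ → ℝ)
    (hrank : ∀ k : Fin n₃, (Matrix.of fun i t => mode3 M A i t k).rank = p) :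
    (∀ X : Fin p → Fin n₂ → Fin n₃ → ℝ,
        fnorm (tstar M A (tstar M (tinv M (tstar M (tT A) A)) (tstar M (tT A) B)) - B) ≤
          fnorm (tstar M A X - B)) ∧
    (∀ X : Fin p → Fin n₂ → Fin n₃ → ℝ,
        (∀ X' : Fin p → Fin n₂ → Fin n₃ → ℝ,
          fnorm (tstar M A X - B) ≤ fnorm (tstar M A X' - B)) →
        X = tstar M (tinv M (tstar M (tT A) A)) (tstar M (tT A) B)) :=
  regression_unique_solution_general M hM A B hrank
end
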